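/- arXiv:1612.06991 — 2 statements merged into one kernel-verified Lean document; each statement's English description precedes it below -/
import Mathlib

section
/- The bilinear bracket on the complex vector space with basis {L̄_n : n ∈ ℤ} ∪ {Ī_n : n ∈ ℤ} ∪ {c_1, c_2, c_3} determined by [L̄_m, L̄_n] = (m − n)·L̄_{m+n−1} + (m(m−1)(m−2)/12)·δ_{m+n−2,0}·c_1, [L̄_m, Ī_n] = −n·Ī_{m+n−1} − (m² − m)·δ_{m+n−1,0}·c_2, [Ī_m, Ī_n] = m·δ_{m+n,0}·c_3, and [x, c_i] = 0 for i = 1,2,3, is alternating and satisfies the Jacobi identity; hence it defines a complex Lie algebra structure (denoted 𝔏). -/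
/-- Basis symbols `L̄_n`, `Ī_n` (n ∈ ℤ), `c_1, c_2, c_3` of the Lie algebra `𝔏`. -/
inductive FHVBasis : Type
  | Lb : ℤ → FHVBasis
  | Ib : ℤ → FHVBasis
  | C1 : FHVBasis
  | C2 : FHVBasis
  | C3 : FHVBasis

/-- The underlying complex vector space of `𝔏`, freely spanned by the basis symbols. -/
abbrev FHV : Type := FHVBasis →₀ ℂ

noncomputable def lbGen (n : ℤ) : FHV := Finsupp.single (FHVBasis.Lb n) 1
noncomputable def ibGen (n : ℤ) : FHV := Finsupp.single (FHVBasis.Ib n) 1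
noncomputable def fc1v : FHV := Finsupp.single FHVBasis.C1 1
noncomputable def fc2v : FHV := Finsupp.single FHVBasis.C2 1
noncomputable def fc3v : FHV := Finsupp.single FHVBasis.C3 1

/-- The bracket of `𝔏` on basis elements:
`[L̄_m, L̄_n] = (m−n)·L̄_{m+n−1} + (m(m−1)(m−2)/12)·δ_{m+n−2,0}·c_1`,
`[L̄_m, Ī_n] = −n·Ī_{m+n−1} − (m²−m)·δ_{m+n−1,0}·c_2`,
`[Ī_m, Ī_n] = m·δ_{m+n,0}·c_3`, `c_1, c_2, c_3` central
(the value `[Ī_m, L̄_n] = −[L̄_n, Ī_m]` is forced by antisymmetry). -/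
noncomputable def fhvBB : FHVBasis → FHVBasis → FHV
  | .Lb m, .Lb n =>
      ((m : ℂ) - (n : ℂ)) • lbGen (m + n - 1)
        + (if m + n - 2 = 0 then (m : ℂ) * ((m : ℂ) - 1) * ((m : ℂ) - 2) / 12 else 0) • fc1v
  | .Lb m, .Ib n =>
      (-(n : ℂ)) • ibGen (m + n - 1)
        - (if m + n - 1 = 0 then (m : ℂ) ^ 2 - (m : ℂ) else 0) • fc2v
  | .Ib m, .Lb n =>
      (m : ℂ) • ibGen (m + n - 1)
        + (if m + n - 1 = 0 then (n : ℂ) ^ 2 - (n : ℂ) else 0) • fc2v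
  | .Ib m, .Ib n =>
      (if m + n = 0 then (m : ℂ) else 0) • fc3v
  | _, _ => 0

/-- The bilinear extension of the bracket of `𝔏` to the whole space. -/
noncomputable def fhvBracket (x y : FHV) : FHV :=
  x.sum fun a ca => y.sum fun b cb => (ca * cb) • fhvBB a b

/-!
The bracket is the bilinear extension of its values on basis pairs, so bilinearity is automatic,
and skew-symmetry and the Jacobi identity, being multilinear, only need to be checked on basis
vectors; for the Jacobiator this follows from its linearity in the first argument together with
its invariance under cyclic permutations. On basis vectors the `L̄`, `Ī` components of these
identities are polynomial identities in the indices, and the central terms cancel because the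
Kronecker deltas fix the sum of the indices.
-/

open Module Finsupp

section BasisCriteria

variable {ι R V M : Type*} [CommRing R] [AddCommGroup V] [Module R V] [AddCommGroup M] [Module R M]

theorem LinearMap.apply_add_apply_swap_eq_zero_of_basis (b : Basis ι R V) {B : V →ₗ[R] V →ₗ[R] M}
    (h : ∀ i j, B (b i) (b j) + B (b j) (b i) = 0) (x y : V) : B x y + B y x = 0 := by
  have : B.flip = -B := LinearMap.ext_basis b b fun i j => eq_neg_of_add_eq_zero_left (h j i)
  rw [← B.flip_apply y x, this]
  simp

theorem LinearMap.apply_self_eq_zero_of_basis (b : Basis ι R V) {B : V →ₗ[R] V →ₗ[R] M}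
    (hself : ∀ i, B (b i) (b i) = 0) (hanti : ∀ i j, B (b i) (b j) + B (b j) (b i) = 0) (x : V) :
    B x x = 0 := by
  induction b.mem_span x using Submodule.span_induction with
  | mem _ h => obtain ⟨i, rfl⟩ := h; exact hself i
  | zero => simp
  | add x y _ _ hx hy =>
    have := apply_add_apply_swap_eq_zero_of_basis b hanti x y
    simp only [map_add, add_apply]
    linear_combination (norm := module) hx + hy + this
  | smul c x _ hx => simp [hx]

theorem LinearMap.jacobi_of_basis (b : Basis ι R V) {B : V →ₗ[R] V →ₗ[R] V}
    (h : ∀ i j k, B (b i) (B (b j) (b k)) + B (b j) (B (b k) (b i)) + B (b k) (B (b i) (b j)) = 0)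
    (x y z : V) : B x (B y z) + B y (B z x) + B z (B x y) = 0 := by
  let J x y z := B x (B y z) + B y (B z x) + B z (B x y)
  have cycle x y z : J x y z = J y z x := by simp only [J]; abel
  have linear_first y z (h : ∀ i, J (b i) y z = 0) x : J x y z = 0 := by
    have : B.flip (B y z) + B y ∘ₗ B z + B z ∘ₗ B.flip y = 0 := b.ext fun i => by simpa using h i
    simpa using congr($this x)
  refine linear_first y z (fun i => ?_) x
  rw [cycle]
  refine linear_first z (b i) (fun j => ?_) y
  rw [cycle]
  exact linear_first (b i) (b j) (fun k => h k i j) z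

end BasisCriteria

theorem Finsupp.linearCombination_linearCombination_apply {α β R M : Type*} [CommSemiring R]
    [AddCommMonoid M] [Module R M] (f : α → β → M) (x : α →₀ R) (y : β →₀ R) :
    linearCombination R (fun a => linearCombination R (f a)) x y =
      x.sum fun a r => y.sum fun b s => (r * s) • f a b := by
  simp [linearCombination_apply, LinearMap.finsupp_sum_apply, Finsupp.smul_sum, mul_smul]

noncomputable def fhvBracketₗ : FHV →ₗ[ℂ] FHV →ₗ[ℂ] FHV :=
  linearCombination ℂ fun a => linearCombination ℂ (fhvBB a)

theorem fhvBracket_eq_fhvBracketₗ (x y : FHV) : fhvBracket x y = fhvBracketₗ x y :=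
  (linearCombination_linearCombination_apply fhvBB x y).symm

theorem fhvBracketₗ_single_single (a b : FHVBasis) :
    fhvBracketₗ (single a 1) (single b 1) = fhvBB a b := by
  simp [fhvBracketₗ]

theorem fhvBB_add_swap (a b : FHVBasis) : fhvBB a b + fhvBB b a = 0 := by
  cases a <;> cases b <;> simp only [fhvBB, add_zero]
  case Lb.Lb m n =>
    rw [add_comm n m]
    split_ifs with h
    · obtain rfl : n = 2 - m := by omega
      push_cast
      module
    · module
  case Ib.Ib m n =>
    rw [add_comm n m]
    split_ifs with h
    · obtain rfl : n = -m := by omega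
      push_cast
      module
    · module
  case Lb.Ib m n => rw [add_comm n m]; module
  case Ib.Lb m n => rw [add_comm n m]; module

theorem fhvBB_self (a : FHVBasis) : fhvBB a a = 0 := by
  have h := fhvBB_add_swap a a
  rwa [← two_smul ℂ, smul_eq_zero, or_iff_right two_ne_zero] at h

theorem fhvBB_jacobi (a b c : FHVBasis) :
    fhvBracketₗ (single a 1) (fhvBB b c) + fhvBracketₗ (single b 1) (fhvBB c a)
      + fhvBracketₗ (single c 1) (fhvBB a b) = 0 := by
  cases a <;> cases b <;> cases c <;>
    simp only [fhvBB, lbGen, ibGen, fc1v, fc2v, fc3v, map_add, map_sub, map_smul,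
      fhvBracketₗ_single_single, map_zero, smul_zero, add_zero, zero_add, sub_zero]
  case Lb.Lb.Lb l m n =>
    ring_nf
    split_ifs with h
    · obtain rfl : l = 3 - m - n := by omega
      push_cast; module
    · module
  case Lb.Lb.Ib l m n =>
    ring_nf
    split_ifs with h
    · obtain rfl : l = 2 - m - n := by omega
      push_cast; module
    · module
  case Lb.Ib.Lb l m n =>
    ring_nf
    split_ifs with h
    · obtain rfl : l = 2 - m - n := by omega
      push_cast; module
    · module
  case Ib.Lb.Lb l m n =>
    ring_nf
    split_ifs with h
    · obtain rfl : l = 2 - m - n := by omega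
      push_cast; module
    · module
  all_goals (ring_nf; split_ifs <;> module)

/-- STATEMENT 7: the bracket determined by the stated values on the basis of `𝔏` is
bilinear, alternating and satisfies the Jacobi identity; hence it defines a complex Lie
algebra structure on `𝔏`. -/
theorem fhvBracket_isLieBracket :
    (∀ x y z : FHV, fhvBracket (x + y) z = fhvBracket x z + fhvBracket y z) ∧
    (∀ (c : ℂ) (x y : FHV), fhvBracket (c • x) y = c • fhvBracket x y) ∧
    (∀ x y z : FHV, fhvBracket x (y + z) = fhvBracket x y + fhvBracket x z) ∧
    (∀ (c : ℂ) (x y : FHV), fhvBracket x (c • y) = c • fhvBracket x y) ∧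
    (∀ x : FHV, fhvBracket x x = 0) ∧
    (∀ x y z : FHV,
      fhvBracket x (fhvBracket y z) + fhvBracket y (fhvBracket z x)
        + fhvBracket z (fhvBracket x y) = 0) := by
  simp only [fhvBracket_eq_fhvBracketₗ, map_add, map_smul, LinearMap.add_apply,
    LinearMap.smul_apply, implies_true, true_and]
  constructor
  · refine LinearMap.apply_self_eq_zero_of_basis Finsupp.basisSingleOne (fun a => ?_) (fun a b => ?_)
    all_goals simp only [coe_basisSingleOne, fhvBracketₗ_single_single, fhvBB_self, fhvBB_add_swap]
  · refine LinearMap.jacobi_of_basis Finsupp.basisSingleOne fun a b c => ?_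
    simpa only [coe_basisSingleOne, fhvBracketₗ_single_single] using fhvBB_jacobi a b c
end

section
/- The bilinear bracket on the complex vector space with basis {T^m ⊗ t^n : (m,n) ∈ ℤ²} ∪ {E^m ⊗ t^n : (m,n) ∈ ℤ²} ∪ {K_1, K_2, K_3, K_4} determined by [T^m ⊗ t^n, T^r ⊗ t^s] = 0, [T^m ⊗ t^n, E^r ⊗ t^s] = (nr − ms)·T^{m+r} ⊗ t^{n+s−1} + m·δ_{m+r,0}·δ_{n+s+1,0}·K_1 + n·δ_{m+r,0}·δ_{n+s,0}·K_2, [E^m ⊗ t^n, E^r ⊗ t^s] = (nr − ms)·E^{m+r} ⊗ t^{n+s−1} + m·δ_{m+r,0}·δ_{n+s+1,0}·K_3 + n·δ_{m+r,0}·δ_{n+s,0}·K_4, and [x, K_i] = 0 for i = 1,…,4, is alternating and satisfies the Jacobi identity; hence it defines a complex Lie algebra structure (denoted 𝔏̂*). -/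
/-!
The bracket is the bilinear extension of its values on basis vectors, so both identities reduce
to basis vectors. Alternation follows from skew-symmetry on the basis, since `LS` has no
`2`-torsion. The Jacobiator is trilinear and invariant under cyclic rotation of its arguments;
on a basis triple it vanishes for trivial reasons unless the triple is, up to rotation,
`(T, E, E)` or `(E, E, E)`. In those cases the `T`- and `E`-coefficients cancel by the Jacobi
identity of the Poisson bracket `{f, g} = E (∂_t f ∂_E g - ∂_E f ∂_t g)` on Laurent
polynomials in `E, t` (the `E`-part of the bracket is this Poisson bracket, the `T`-part its
adjoint module). The three Kronecker conditions on the central terms of a Jacobi sum all become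
one condition on the total degree of the triple, under which their coefficients cancel.
-/

/-- Basis symbols `T^m ⊗ t^n`, `E^m ⊗ t^n` for `(m,n) ∈ ℤ²`, and `K_1, …, K_4` of the
Lie algebra `𝔏̂*`. -/
inductive LSBasis : Type
  | T : ℤ → ℤ → LSBasis
  | E : ℤ → ℤ → LSBasis
  | K1 : LSBasis
  | K2 : LSBasis
  | K3 : LSBasis
  | K4 : LSBasis

/-- The underlying complex vector space of `𝔏̂*`, freely spanned by the basis symbols. -/
abbrev LS : Type := LSBasis →₀ ℂ

/-- The element `T^m ⊗ t^n`. -/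
noncomputable def tsGen (m n : ℤ) : LS := Finsupp.single (LSBasis.T m n) 1
/-- The element `E^m ⊗ t^n`. -/
noncomputable def esGen (m n : ℤ) : LS := Finsupp.single (LSBasis.E m n) 1
noncomputable def ks1v : LS := Finsupp.single LSBasis.K1 1
noncomputable def ks2v : LS := Finsupp.single LSBasis.K2 1
noncomputable def ks3v : LS := Finsupp.single LSBasis.K3 1
noncomputable def ks4v : LS := Finsupp.single LSBasis.K4 1

/-- The bracket of `𝔏̂*` on basis elements:
`[T^m ⊗ t^n, T^r ⊗ t^s] = 0`,
`[T^m ⊗ t^n, E^r ⊗ t^s] = (nr − ms)·T^{m+r} ⊗ t^{n+s−1} + m·δ_{m+r,0}·δ_{n+s+1,0}·K_1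
  + n·δ_{m+r,0}·δ_{n+s,0}·K_2`,
`[E^m ⊗ t^n, E^r ⊗ t^s] = (nr − ms)·E^{m+r} ⊗ t^{n+s−1} + m·δ_{m+r,0}·δ_{n+s+1,0}·K_3
  + n·δ_{m+r,0}·δ_{n+s,0}·K_4`,
`K_1, …, K_4` central (the value `[E^r ⊗ t^s, T^m ⊗ t^n]` is forced by antisymmetry). -/
noncomputable def lsBB : LSBasis → LSBasis → LS
  | .T _ _, .T _ _ => 0
  | .T m n, .E r s =>
      ((n * r - m * s : ℤ) : ℂ) • tsGen (m + r) (n + s - 1)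
        + (if m + r = 0 ∧ n + s + 1 = 0 then (m : ℂ) else 0) • ks1v
        + (if m + r = 0 ∧ n + s = 0 then (n : ℂ) else 0) • ks2v
  | .E r s, .T m n =>
      ((m * s - n * r : ℤ) : ℂ) • tsGen (m + r) (n + s - 1)
        - (if m + r = 0 ∧ n + s + 1 = 0 then (m : ℂ) else 0) • ks1v
        - (if m + r = 0 ∧ n + s = 0 then (n : ℂ) else 0) • ks2v
  | .E m n, .E r s =>
      ((n * r - m * s : ℤ) : ℂ) • esGen (m + r) (n + s - 1)
        + (if m + r = 0 ∧ n + s + 1 = 0 then (m : ℂ) else 0) • ks3v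
        + (if m + r = 0 ∧ n + s = 0 then (n : ℂ) else 0) • ks4v
  | _, _ => 0

/-- The bilinear extension of the bracket of `𝔏̂*` to the whole space. -/
noncomputable def lsBracket (x y : LS) : LS :=
  x.sum fun a ca => y.sum fun b cb => (ca * cb) • lsBB a b

open Finsupp LinearMap

namespace Finsupp

section Semiring

variable {R α β M : Type*} [CommSemiring R] [AddCommMonoid M] [Module R M]

noncomputable def bilinearLift (f : α → β → M) : (α →₀ R) →ₗ[R] (β →₀ R) →ₗ[R] M :=
  linearCombination R fun a => linearCombination R (f a)

theorem bilinearLift_apply (f : α → β → M) (x : α →₀ R) (y : β →₀ R) :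
    bilinearLift f x y = x.sum fun a ca => y.sum fun b cb => (ca * cb) • f a b := by
  simp [bilinearLift, linearCombination_apply, smul_sum, mul_smul, finsupp_sum_apply]

@[simp]
theorem bilinearLift_single (f : α → β → M) (a : α) (b : β) (c d : R) :
    bilinearLift f (single a c) (single b d) = (c * d) • f a b := by
  simp [bilinearLift, mul_smul]

end Semiring

section Ring

variable {R α M : Type*} [CommRing R] [AddCommGroup M] [Module R M]

theorem bilinearLift_swap {f : α → α → M} (hf : ∀ a b, f b a = -f a b) (x y : α →₀ R) :
    bilinearLift f y x = -bilinearLift f x y := by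
  have : (bilinearLift f).flip = -bilinearLift (R := R) f := by
    ext a b
    simp [hf b a]
  exact congr($this x y)

theorem bilinearLift_self [IsAddTorsionFree M] {f : α → α → M} (hf : ∀ a b, f b a = -f a b)
    (x : α →₀ R) : bilinearLift f x x = 0 :=
  self_eq_neg.mp (bilinearLift_swap hf x x)

end Ring

end Finsupp

namespace LinearMap

variable {R M : Type*} [CommSemiring R] [AddCommMonoid M] [Module R M]

def jacobiator (B : M →ₗ[R] M →ₗ[R] M) : M →ₗ[R] M →ₗ[R] M →ₗ[R] M :=
  mk₂ R (fun x y => B x ∘ₗ B y + B y ∘ₗ B.flip x + B.flip (B x y))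
    (fun _ _ _ => by ext; simp; abel)
    (fun _ _ _ => by ext; simp)
    (fun _ _ _ => by ext; simp; abel)
    (fun _ _ _ => by ext; simp)

@[simp]
theorem jacobiator_apply (B : M →ₗ[R] M →ₗ[R] M) (x y z : M) :
    jacobiator B x y z = B x (B y z) + B y (B z x) + B z (B x y) :=
  rfl

theorem jacobiator_rotate (B : M →ₗ[R] M →ₗ[R] M) (x y z : M) :
    jacobiator B x y z = jacobiator B y z x := by
  simp only [jacobiator_apply]
  abel

end LinearMap

noncomputable abbrev lsBracketₗ : LS →ₗ[ℂ] LS →ₗ[ℂ] LS := bilinearLift lsBB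

theorem lsBracket_eq_lsBracketₗ (x y : LS) : lsBracket x y = lsBracketₗ x y :=
  (bilinearLift_apply lsBB x y).symm

theorem lsBB_swap (a b : LSBasis) : lsBB b a = -lsBB a b := by
  rcases a with ⟨m, n⟩ | ⟨m, n⟩ | _ | _ | _ | _ <;>
  rcases b with ⟨r, s⟩ | ⟨r, s⟩ | _ | _ | _ | _ <;>
  simp only [lsBB, neg_zero]
  case T.E | E.T => push_cast; module
  case E.E =>
    rw [add_comm r m, add_comm s n]
    split_ifs
    · omega
    · obtain ⟨hr, hs⟩ : r = -m ∧ s = -1 - n := by omega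
      subst hr hs; push_cast; module
    · obtain ⟨hr, hs⟩ : r = -m ∧ s = -n := by omega
      subst hr hs; push_cast; module
    · push_cast; module

theorem jacobiator_tsGen_esGen_esGen (m n r s u v : ℤ) :
    jacobiator lsBracketₗ (tsGen m n) (esGen r s) (esGen u v) = 0 := by
  simp only [jacobiator_apply, tsGen, esGen, ks1v, ks2v, ks3v, ks4v, bilinearLift_single, lsBB,
    map_add, map_sub, map_smul, one_mul, one_smul, smul_zero, add_zero, sub_zero, smul_add,
    smul_sub]
  -- `ring_nf` turns the Kronecker conditions of the three terms into the same condition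
  -- `m + r + u = 0 ∧ n + s + v = 0` (first central generator) or `… = 1` (second one).
  ring_nf
  split_ifs
  · omega
  · obtain ⟨hm, hn⟩ : m = -u - r ∧ n = -s - v := by omega
    subst hm hn; push_cast; module
  · obtain ⟨hm, hn⟩ : m = -u - r ∧ n = 1 - s - v := by omega
    subst hm hn; push_cast; module
  · push_cast; module

theorem jacobiator_esGen_esGen_esGen (m n r s u v : ℤ) :
    jacobiator lsBracketₗ (esGen m n) (esGen r s) (esGen u v) = 0 := by
  simp only [jacobiator_apply, esGen, ks3v, ks4v, bilinearLift_single, lsBB,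
    map_add, map_smul, one_mul, one_smul, smul_zero, add_zero, smul_add]
  ring_nf
  split_ifs
  · omega
  · obtain ⟨hm, hn⟩ : m = -u - r ∧ n = -s - v := by omega
    subst hm hn; push_cast; module
  · obtain ⟨hm, hn⟩ : m = -u - r ∧ n = 1 - s - v := by omega
    subst hm hn; push_cast; module
  · push_cast; module

theorem jacobiator_lsBracketₗ_single (a b c : LSBasis) :
    jacobiator lsBracketₗ (single a 1) (single b 1) (single c 1) = 0 := by
  rcases a with ⟨m, n⟩ | ⟨m, n⟩ | _ | _ | _ | _ <;>
  rcases b with ⟨r, s⟩ | ⟨r, s⟩ | _ | _ | _ | _ <;>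
  rcases c with ⟨u, v⟩ | ⟨u, v⟩ | _ | _ | _ | _
  case T.E.E => exact jacobiator_tsGen_esGen_esGen m n r s u v
  case E.T.E => rw [jacobiator_rotate]; exact jacobiator_tsGen_esGen_esGen r s u v m n
  case E.E.T => rw [← jacobiator_rotate]; exact jacobiator_tsGen_esGen_esGen u v m n r s
  case E.E.E => exact jacobiator_esGen_esGen_esGen m n r s u v
  -- The `K`s are central and brackets of `T`s with `T`s or `E`s lie in the span of `T`s and `K`s,
  -- so every remaining Jacobi sum is a sum of zero brackets.
  all_goals simp only [jacobiator_apply, tsGen, esGen, ks1v, ks2v, ks3v, ks4v,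
    bilinearLift_single, lsBB, map_add, map_sub, map_smul, map_zero, mul_one, smul_zero, add_zero,
    sub_zero]

/-- STATEMENT 12: the bracket determined by the stated values on the basis of `𝔏̂*` is
bilinear, alternating and satisfies the Jacobi identity; hence it defines a complex Lie
algebra structure on `𝔏̂*`. -/
theorem lsBracket_isLieBracket :
    (∀ x y z : LS, lsBracket (x + y) z = lsBracket x z + lsBracket y z) ∧
    (∀ (c : ℂ) (x y : LS), lsBracket (c • x) y = c • lsBracket x y) ∧
    (∀ x y z : LS, lsBracket x (y + z) = lsBracket x y + lsBracket x z) ∧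
    (∀ (c : ℂ) (x y : LS), lsBracket x (c • y) = c • lsBracket x y) ∧
    (∀ x : LS, lsBracket x x = 0) ∧
    (∀ x y z : LS,
      lsBracket x (lsBracket y z) + lsBracket y (lsBracket z x)
        + lsBracket z (lsBracket x y) = 0) := by
  have jacobi : jacobiator lsBracketₗ = 0 := by
    ext a b c : 6
    exact jacobiator_lsBracketₗ_single a b c
  simp only [lsBracket_eq_lsBracketₗ]
  exact ⟨fun x y z => map_add₂ _ x y z, fun c x y => map_smul₂ _ c x y,
    fun x y z => map_add _ y z, fun c x y => map_smul _ c y, bilinearLift_self lsBB_swap,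
    fun x y z => congr($jacobi x y z)⟩
end
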